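/- arXiv:2603.12656 — 4 statements merged into one kernel-verified Lean document; each statement's English description precedes it below -/
import Mathlib

section
/- Let n ≥ 1, M ∈ Sp(2n,ℝ), and ω ∈ ℂ with |ω| = 1. Then the complex number D_ω(M) = (−1)^{n−1} · (conj ω)^n · det(M − ω I_{2n}) is real, i.e., its imaginary part vanishes. -/
/-! The characteristic polynomial of a symplectic matrix is self-reciprocal: from
`Mᵀ J (M - ω) = -ω (Mᵀ - ω⁻¹) J` and `det M = 1` one gets `det (M - ω) = ω^(2n) det (M - ω⁻¹)`.
For real `M` and `|ω| = 1` we have `ω⁻¹ = conj ω`, so `z = det (M - ω)` satisfies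
`z = ω^(2n) conj z`, and then `conj (conj ω^n z) = ω^n conj z = conj ω^n z`. -/

open Matrix

noncomputable section

/-- Index type for `2m × 2m` matrices, split into two halves. -/
abbrev Idx (m : ℕ) := Fin m ⊕ Fin m

/-- Square real matrices of size `2m`. -/
abbrev Mat (m : ℕ) := Matrix (Idx m) (Idx m) ℝ

/-- The standard symplectic matrix `J_{2m} = [[0, -I_m],[I_m, 0]]`. -/
def Jmat (m : ℕ) : Mat m := Matrix.fromBlocks 0 (-1) 1 0

/-- `M ∈ Sp(2m, ℝ)`: `Mᵀ J M = J`. -/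
def IsSymplectic {m : ℕ} (M : Mat m) : Prop := Mᵀ * Jmat m * M = Jmat m

theorem IsSymplectic.mem_symplecticGroup {m : ℕ} {M : Mat m} (hM : IsSymplectic M) :
    M ∈ symplecticGroup (Fin m) ℝ :=
  SymplecticGroup.mem_iff'.2 hM

namespace SymplecticGroup

variable {l K : Type*} [DecidableEq l] [Fintype l] [Field K]

theorem det_sub_smul_one_eq_pow_mul {A : Matrix (l ⊕ l) (l ⊕ l) K}
    (hA : A ∈ symplecticGroup l K) {ω : K} (hω : ω ≠ 0) :
    (A - ω • 1).det = ω ^ (2 * Fintype.card l) * (A - ω⁻¹ • 1).det := by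
  have hAJA : Aᵀ * J l K * A = J l K := mem_iff'.1 hA
  have key : Aᵀ * J l K * (A - ω • 1) = (-ω) • ((Aᵀ - ω⁻¹ • 1) * J l K) := by
    rw [Matrix.mul_sub, hAJA, Matrix.sub_mul, smul_sub, Matrix.mul_smul, Matrix.mul_one,
      Matrix.smul_mul, Matrix.one_mul, smul_smul, neg_mul, mul_inv_cancel₀ hω]
    module
  have hcard : Fintype.card (l ⊕ l) = 2 * Fintype.card l := by
    rw [Fintype.card_sum, two_mul]
  have htr : (Aᵀ - ω⁻¹ • 1).det = (A - ω⁻¹ • 1).det := by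
    rw [← det_transpose, transpose_sub, transpose_transpose, transpose_smul, transpose_one]
  have hdet := congrArg det key
  rw [det_mul, det_mul, det_transpose, det_eq_one hA, one_mul, det_smul, det_mul,
    hcard, (even_two_mul _).neg_pow, htr] at hdet
  exact mul_right_cancel₀ (isUnit_det_J l K).ne_zero (by linear_combination hdet)

end SymplecticGroup

theorem Matrix.conj_det_map_ofReal_sub_smul_one {ι : Type*} [DecidableEq ι] [Fintype ι]
    (M : Matrix ι ι ℝ) (ω : ℂ) :
    starRingEnd ℂ (M.map (fun r : ℝ => (r : ℂ)) - ω • 1).det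
      = (M.map (fun r : ℝ => (r : ℂ)) - starRingEnd ℂ ω • 1).det := by
  rw [RingHom.map_det]
  congr 1
  ext i j
  by_cases h : i = j <;> simp [h]

theorem D_omega_is_real_general
    (n : ℕ) (M : Mat n) (hM : IsSymplectic M)
    (ω : ℂ) (hω : ‖ω‖ = 1) :
    ((-1 : ℂ) ^ (n - 1) * (starRingEnd ℂ ω) ^ n *
      (M.map (fun r : ℝ => (r : ℂ)) - ω • (1 : Matrix (Idx n) (Idx n) ℂ)).det).im = 0 := by
  have hω0 : ω ≠ 0 := norm_ne_zero_iff.1 (hω ▸ one_ne_zero)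
  have hMc : M.map (fun r : ℝ => (r : ℂ)) ∈ symplecticGroup (Fin n) ℂ :=
    SymplecticGroup.map_mem hM.mem_symplecticGroup Complex.ofRealHom
  have hz : (M.map (fun r : ℝ => (r : ℂ)) - ω • 1).det
      = ω ^ (2 * n) * starRingEnd ℂ (M.map (fun r : ℝ => (r : ℂ)) - ω • 1).det := by
    rw [Matrix.conj_det_map_ofReal_sub_smul_one, ← Complex.inv_eq_conj hω]
    simpa using SymplecticGroup.det_sub_smul_one_eq_pow_mul hMc hω0
  generalize (M.map (fun r : ℝ => (r : ℂ)) - ω • 1).det = z at hz ⊢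
  refine Complex.conj_eq_iff_im.1 ?_
  rw [map_mul, map_mul, map_pow, map_pow, map_neg, map_one, Complex.conj_conj,
    ← Complex.inv_eq_conj hω]
  conv_rhs => rw [hz]
  rw [two_mul, pow_add, inv_pow]
  field_simp

theorem D_omega_is_real
    (n : ℕ) (hn : 1 ≤ n) (M : Mat n) (hM : IsSymplectic M)
    (ω : ℂ) (hω : ‖ω‖ = 1) :
    ((-1 : ℂ) ^ (n - 1) * (starRingEnd ℂ ω) ^ n *
      (M.map (fun r : ℝ => (r : ℂ)) - ω • (1 : Matrix (Idx n) (Idx n) ℂ)).det).im = 0 :=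
  D_omega_is_real_general n M hM ω hω

end
end

section
/- Let h ≥ 1 and let G be a closed additive subgroup of ℝ^h. Then the connected component of 0 in G is a linear subspace of ℝ^h, i.e., it is closed under addition and under multiplication by arbitrary real scalars. -/
/-!
The component is the lineality space `W = {v | ∀ t : ℝ, t • v ∈ G}`, the largest subspace
contained in `G`; lines through `0` are connected, so `W` lies in the component. Conversely,
`G` meets a complement `q` of `W` discretely: if nonzero `yₙ ∈ G ∩ q` tend to `0` with directions
`yₙ / ‖yₙ‖ → v`, the multiples `⌊t / ‖yₙ‖⌋ • yₙ ∈ G` tend to `t • v`, so `v ∈ W ∩ q = 0`, although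
`‖v‖ = 1`. Projecting onto `q` along `W ⊆ G` then shows that small elements of `G` lie in `W`,
so `W` is open as well as closed in `G`.
-/

open Set Filter Topology

theorem tendsto_floor_div_mul {ι : Type*} {l : Filter ι} {a : ι → ℝ} (ha : ∀ i, 0 < a i)
    (ha0 : Tendsto a l (𝓝 0)) (t : ℝ) :
    Tendsto (fun i => (⌊t / a i⌋ : ℝ) * a i) l (𝓝 t) := by
  refine tendsto_of_tendsto_of_tendsto_of_le_of_le (by simpa using tendsto_const_nhds.sub ha0)
    tendsto_const_nhds (fun i => ?_) (fun i => ?_)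
  · have := mul_lt_mul_of_pos_right (Int.sub_one_lt_floor (t / a i)) (ha i)
    rw [sub_mul, div_mul_cancel₀ _ (ha i).ne', one_mul] at this
    exact this.le
  · exact (le_div_iff₀ (ha i)).1 (Int.floor_le _)

theorem IsPreconnected.subset_of_isClosed_of_inter_subset {α : Type*} [TopologicalSpace α]
    {s t u : Set α} (hs : IsPreconnected s) (ht : IsClosed t) (hu : IsOpen u) (htu : t ⊆ u)
    (hsu : s ∩ u ⊆ t) (hst : (s ∩ t).Nonempty) : s ⊆ t := by
  have := isPreconnected_iff_subset_of_disjoint.1 hs u tᶜ hu ht.isOpen_compl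
    (fun x _ => (em (x ∈ t)).imp_left (@htu x)) (by
      ext x; simp only [mem_inter_iff, mem_compl_iff, mem_empty_iff_false, iff_false]
      exact fun ⟨hxs, hxu, hxt⟩ => hxt (hsu ⟨hxs, hxu⟩))
  rcases this with h | h
  · exact fun x hx => hsu ⟨hx, h hx⟩
  · obtain ⟨x, hxs, hxt⟩ := hst
    exact absurd hxt (h hxs)

namespace AddSubgroup

section Module

variable {E : Type*} [AddCommGroup E] [Module ℝ E]

def lineality (G : AddSubgroup E) : Submodule ℝ E where
  carrier := {v | ∀ t : ℝ, t • v ∈ G}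
  add_mem' hv hw t := by simpa only [smul_add] using G.add_mem (hv t) (hw t)
  zero_mem' t := by simpa only [smul_zero] using G.zero_mem
  smul_mem' s _ hv t := by simpa only [smul_smul] using hv (t * s)

variable {G : AddSubgroup E}

theorem lineality_subset : (G.lineality : Set E) ⊆ G := fun v hv => one_smul ℝ v ▸ hv 1

theorem lineality_subset_connectedComponentIn [TopologicalSpace E] [ContinuousSMul ℝ E] :
    (G.lineality : Set E) ⊆ connectedComponentIn (G : Set E) 0 := fun v hv =>
  (isPreconnected_range (continuous_id.smul continuous_const)).subset_connectedComponentIn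
    ⟨0, zero_smul ℝ v⟩ (range_subset_iff.2 hv) ⟨1, one_smul ℝ v⟩

end Module

variable {E : Type*} [NormedAddCommGroup E] [NormedSpace ℝ E] {G : AddSubgroup E}

theorem mem_lineality_of_tendsto {ι : Type*} {l : Filter ι} [l.NeBot] (hG : IsClosed (G : Set E))
    {y : ι → E} {v : E} (hyG : ∀ i, y i ∈ G) (hy0 : ∀ i, y i ≠ 0) (hy : Tendsto y l (𝓝 0))
    (hv : Tendsto (fun i => ‖y i‖⁻¹ • y i) l (𝓝 v)) : v ∈ G.lineality := by
  intro t
  have hnorm : Tendsto (fun i => ‖y i‖) l (𝓝 0) := by simpa using hy.norm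
  have hlim := (tendsto_floor_div_mul (fun i => norm_pos_iff.2 (hy0 i)) hnorm t).smul hv
  refine hG.mem_of_tendsto (hlim.congr fun i => ?_)
    (Eventually.of_forall fun i => G.zsmul_mem (hyG i) ⌊t / ‖y i‖⌋)
  rw [smul_smul, mul_assoc, mul_inv_cancel₀ (norm_ne_zero_iff.2 (hy0 i)), mul_one,
    Int.cast_smul_eq_zsmul]

variable [FiniteDimensional ℝ E]

theorem eventually_eq_zero_of_disjoint_lineality (hG : IsClosed (G : Set E))
    {q : Submodule ℝ E} (hq : Disjoint G.lineality q) :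
    ∀ᶠ x in 𝓝 (0 : E), x ∈ G → x ∈ q → x = 0 := by
  by_contra hcon
  simp only [not_eventually, Classical.not_imp] at hcon
  obtain ⟨x, hx0, hxG, hxq, hxne⟩ : ∃ x : ℕ → E, Tendsto x atTop (𝓝 0) ∧ (∀ n, x n ∈ G) ∧
      (∀ n, x n ∈ q) ∧ ∀ n, x n ≠ 0 := by
    obtain ⟨x, hx0, hx⟩ := exists_seq_forall_of_frequently hcon
    exact ⟨x, hx0, fun n => (hx n).1, fun n => (hx n).2.1, fun n => (hx n).2.2⟩
  have hK : IsCompact ((q : Set E) ∩ Metric.sphere 0 1) :=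
    (isCompact_sphere 0 1).inter_left q.closed_of_finiteDimensional
  have hu : ∀ n, ‖x n‖⁻¹ • x n ∈ (q : Set E) ∩ Metric.sphere 0 1 := fun n =>
    ⟨q.smul_mem _ (hxq n), by simp [norm_smul, hxne n]⟩
  obtain ⟨v, ⟨hvq, hv1⟩, φ, hφ, hv⟩ := hK.tendsto_subseq hu
  have hvG : v ∈ G.lineality := mem_lineality_of_tendsto hG (fun n => hxG (φ n))
    (fun n => hxne (φ n)) (hx0.comp hφ.tendsto_atTop) hv
  have : v = 0 := (Submodule.disjoint_def.1 hq) v hvG hvq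
  simp [this] at hv1

theorem eventually_mem_lineality (hG : IsClosed (G : Set E)) :
    ∀ᶠ x in 𝓝 (0 : E), x ∈ G → x ∈ G.lineality := by
  obtain ⟨q, hq⟩ := G.lineality.exists_isCompl
  set π := q.projection G.lineality hq.symm
  have hπ : Tendsto π (𝓝 0) (𝓝 0) := by
    simpa using π.continuous_of_finiteDimensional.tendsto 0
  filter_upwards [hπ.eventually (eventually_eq_zero_of_disjoint_lineality hG hq.disjoint)]
    with x hx hxG
  have hπx : π x = x - G.lineality.projection q hq x := by
    rw [eq_sub_iff_add_eq', Submodule.projection_add_projection_eq_self]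
  have hπG : π x ∈ G :=
    hπx ▸ G.sub_mem hxG (lineality_subset (Submodule.projection_apply_mem _ _))
  exact (Submodule.projection_apply_eq_zero_iff hq.symm).1
    (hx hπG (Submodule.projection_apply_mem _ _))

theorem connectedComponentIn_zero_eq_lineality (hG : IsClosed (G : Set E)) :
    connectedComponentIn (G : Set E) 0 = G.lineality := by
  refine Subset.antisymm ?_ lineality_subset_connectedComponentIn
  obtain ⟨ε, hε, hsmall⟩ := Metric.eventually_nhds_iff.1 (eventually_mem_lineality hG)
  refine isPreconnected_connectedComponentIn.subset_of_isClosed_of_inter_subset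
    G.lineality.closed_of_finiteDimensional Metric.isOpen_thickening
    (Metric.self_subset_thickening hε (G.lineality : Set E)) ?_
    ⟨0, mem_connectedComponentIn G.zero_mem, G.lineality.zero_mem⟩
  rintro x ⟨hxC, hxU⟩
  obtain ⟨w, hw, hxw⟩ := Metric.mem_thickening_iff.1 hxU
  have hxG := connectedComponentIn_subset _ _ hxC
  have hdiff := hsmall (by simpa [dist_eq_norm] using hxw) (G.sub_mem hxG (lineality_subset hw))
  simpa using G.lineality.add_mem hdiff hw

end AddSubgroup

theorem connected_component_of_closed_subgroup_is_subspace_general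
    (h : ℕ) (G : AddSubgroup (Fin h → ℝ))
    (hG : IsClosed (G : Set (Fin h → ℝ))) :
    ∃ W : Submodule ℝ (Fin h → ℝ),
      (W : Set (Fin h → ℝ)) = connectedComponentIn (G : Set (Fin h → ℝ)) 0 :=
  ⟨G.lineality, (G.connectedComponentIn_zero_eq_lineality hG).symm⟩

theorem connected_component_of_closed_subgroup_is_subspace
    (h : ℕ) (hh : 1 ≤ h) (G : AddSubgroup (Fin h → ℝ))
    (hG : IsClosed (G : Set (Fin h → ℝ))) :
    ∃ W : Submodule ℝ (Fin h → ℝ),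
      (W : Set (Fin h → ℝ)) = connectedComponentIn (G : Set (Fin h → ℝ)) 0 :=
  connected_component_of_closed_subgroup_is_subspace_general h G hG
end

section
/- Let h ≥ 1 and v ∈ ℝ^h. For every a ∈ A(v) and every ε ∈ (0, 1/3), there exist infinitely many N ∈ ℕ such that |{N·v} − χ(a)| < ε, where {N·v} ∈ [0,1)^h is the vector of componentwise fractional parts of N·v, χ(a) = (ψ(a₁), …, ψ(a_h)), and |·| is the Euclidean norm on ℝ^h. -/
open Set

noncomputable section

/-- The integer lattice `ℤ^h` inside `ℝ^h`. -/
def intLattice (h : ℕ) : AddSubgroup (Fin h → ℝ) :=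
  AddSubgroup.pi Set.univ fun _ => AddSubgroup.zmultiples (1 : ℝ)

/-- The torus `T^h = ℝ^h / ℤ^h`, with the quotient topology. -/
abbrev Torus (h : ℕ) := (Fin h → ℝ) ⧸ intLattice h

/-- The quotient homomorphism `π : ℝ^h → T^h`. -/
def torusProj (h : ℕ) : (Fin h → ℝ) →+ Torus h := QuotientAddGroup.mk' (intLattice h)
/-- The closure `H` of `{π(m·v) : m ∈ ℕ, m ≥ 1}` in the torus `T^h`. -/
def Hclosure (h : ℕ) (v : Fin h → ℝ) : Set (Torus h) :=
  closure {p : Torus h | ∃ m : ℕ, 1 ≤ m ∧ p = torusProj h (m • v)}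

/-- `V`, the connected component of `0` in the closed subgroup `π⁻¹(H)` of `ℝ^h`. -/
def Vcomp (h : ℕ) (v : Fin h → ℝ) : Set (Fin h → ℝ) :=
  connectedComponentIn (torusProj h ⁻¹' Hclosure h v) 0

/-- `A(v) = V ∖ ⋃_{k : v_k ∉ ℚ} {x ∈ V : x_k = 0}`. -/
def Aset (h : ℕ) (v : Fin h → ℝ) : Set (Fin h → ℝ) :=
  Vcomp h v \ ⋃ (k : Fin h) (_ : Irrational (v k)), {x : Fin h → ℝ | x k = 0}

/-- `ψ(t) = 0` if `t ≥ 0` and `ψ(t) = 1` if `t < 0`. -/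
def psi (t : ℝ) : ℝ := if t < 0 then 1 else 0

/-!
The preimage `π⁻¹(H)` is the closure of the subgroup `ℤ v + ℤ^h`, and by simultaneous Dirichlet
approximation each of its points is a limit of points `N v + z` (`z ∈ ℤ^h`) with `N` arbitrarily
large. The identity component of a closed subgroup of a finite-dimensional real vector space is a
linear subspace, so `t a ∈ π⁻¹(H)` for a small `t > 0`. An approximation `N v + z` of `t a` puts
`{N v_k}` just above `0` where `a_k > 0` and just below `1` where `a_k < 0`; where `a_k = 0` the
number `v_k` is rational, and a close enough approximation is exact in that coordinate.
-/

open Filter Topology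

lemma IsPreconnected.exists_mem_ne_zero_norm_lt {E : Type*} [NormedAddGroup E] {X : Set E}
    (hX : IsPreconnected X) (h0 : 0 ∈ X) {b : E} (hb : b ∈ X) (hb0 : b ≠ 0) {r : ℝ} (hr : 0 < r) :
    ∃ x ∈ X, x ≠ 0 ∧ ‖x‖ < r := by
  have hpos : 0 < min (r / 2) ‖b‖ := lt_min (half_pos hr) (norm_pos_iff.2 hb0)
  obtain ⟨x, hx, hxc⟩ := (hX.image _ continuous_norm.continuousOn).Icc_subset
    ⟨0, h0, rfl⟩ ⟨b, hb, rfl⟩ ⟨by simpa using hpos.le, min_le_right _ _⟩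
  change ‖x‖ = _ at hxc
  refine ⟨x, hx, fun hx0 => ?_, ?_⟩
  · simp only [hx0, norm_zero] at hxc
    exact hpos.ne hxc
  · rw [hxc]
    exact (min_le_left _ _).trans_lt (half_lt_self hr)

section ClosedSubgroup

variable {E : Type*} [NormedAddCommGroup E] [NormedSpace ℝ E]

def AddSubgroup.lineality_s11 (S : AddSubgroup E) : Submodule ℝ E where
  carrier := {x | ∀ t : ℝ, t • x ∈ S}
  add_mem' hx hy t := by simpa [smul_add] using S.add_mem (hx t) (hy t)
  zero_mem' t := by simp
  smul_mem' c x hx t := by simpa [smul_smul] using hx (t * c)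

variable [FiniteDimensional ℝ E]

theorem AddSubgroup.exists_ne_zero_forall_smul_mem (S : AddSubgroup E) (hS : IsClosed (S : Set E))
    (hsmall : ∀ r > 0, ∃ x ∈ S, x ≠ 0 ∧ ‖x‖ < r) : ∃ u ≠ (0 : E), ∀ t : ℝ, t • u ∈ S := by
  choose x hxS hx0 hxr using fun n : ℕ => hsmall (1 / (n + 1)) Nat.one_div_pos_of_nat
  have hunit : ∀ n, ‖x n‖⁻¹ • x n ∈ Metric.sphere (0 : E) 1 := fun n => by
    simp [norm_smul, inv_mul_cancel₀ (norm_ne_zero_iff.2 (hx0 n))]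
  obtain ⟨u, hu, φ, hφ, hlim⟩ := (isCompact_sphere (0 : E) 1).tendsto_subseq hunit
  refine ⟨u, ne_zero_of_mem_sphere one_ne_zero ⟨u, hu⟩, ?_⟩
  suffices hpos : ∀ t : ℝ, 0 ≤ t → t • u ∈ S by
    intro t
    rcases le_total 0 t with ht | ht
    · exact hpos t ht
    · simpa using S.neg_mem (hpos (-t) (neg_nonneg.2 ht))
  intro t ht
  have hnorm : Tendsto (fun n => ‖x (φ n)‖) atTop (𝓝[>] 0) := by
    refine tendsto_nhdsWithin_iff.2 ⟨?_, Eventually.of_forall fun n => norm_pos_iff.2 (hx0 _)⟩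
    exact (squeeze_zero (fun n => norm_nonneg _) (fun n => (hxr n).le)
      tendsto_one_div_add_atTop_nhds_zero_nat).comp hφ.tendsto_atTop
  have hcoef := (tendsto_nat_floor_mul_div_atTop ht).comp (tendsto_inv_nhdsGT_zero.comp hnorm)
  refine hS.mem_of_tendsto (hcoef.smul hlim) (Eventually.of_forall fun n => ?_)
  have hn : ‖x (φ n)‖ ≠ 0 := norm_ne_zero_iff.2 (hx0 _)
  simp only [Function.comp_apply, smul_smul, div_mul_cancel₀ _ (inv_ne_zero hn)]
  rw [Nat.cast_smul_eq_nsmul]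
  exact S.nsmul_mem (hxS _) _

theorem AddSubgroup.smul_mem_of_mem_connectedComponentIn (S : AddSubgroup E)
    (hS : IsClosed (S : Set E)) {x : E} (hx : x ∈ connectedComponentIn (S : Set E) 0) (t : ℝ) :
    t • x ∈ S := by
  obtain ⟨C, hWC⟩ := S.lineality_s11.exists_isCompl
  set P := C.projectionOnto S.lineality_s11 hWC.symm
  have hP_sub : ∀ y, y - P y ∈ S.lineality_s11 := fun y => by
    rw [← Submodule.projectionOnto_apply_eq_zero_iff hWC.symm, map_sub,
      Submodule.projectionOnto_apply_left, sub_self]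
  set K := connectedComponentIn (S : Set E) 0
  have hKS : ∀ y ∈ K, (P y : E) ∈ S := fun y hy => by
    rw [← sub_sub_cancel y (P y : E)]
    exact S.sub_mem (connectedComponentIn_subset _ _ hy) (by simpa using hP_sub y 1)
  -- The closed subgroup `S ∩ C` contains no line, so the connected set `P '' K` is `{0}`.
  suffices hPK : ∀ y ∈ K, P y = 0 by
    exact ((Submodule.projectionOnto_apply_eq_zero_iff hWC.symm).1 (hPK x hx)) t
  by_contra! ⟨y, hy, hPy⟩
  set S' := S.comap C.subtype.toAddMonoidHom
  have hK0 : (0 : E) ∈ K := mem_connectedComponentIn S.zero_mem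
  obtain ⟨u, hu0, hu⟩ := S'.exists_ne_zero_forall_smul_mem
    (hS.preimage continuous_subtype_val) fun r hr => by
      obtain ⟨_, ⟨z, hz, rfl⟩, hPz, hr⟩ := (isPreconnected_connectedComponentIn.image P
        P.continuous_of_finiteDimensional.continuousOn).exists_mem_ne_zero_norm_lt
          ⟨0, hK0, map_zero P⟩ ⟨y, hy, rfl⟩ hPy hr
      exact ⟨P z, hKS z hz, hPz, hr⟩
  exact hu0 (Subtype.ext (Submodule.disjoint_def.1 hWC.disjoint u hu u.2))

end ClosedSubgroup

lemma mem_intLattice {h : ℕ} {x : Fin h → ℝ} :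
    x ∈ intLattice h ↔ ∀ i, ∃ k : ℤ, x i = k := by
  simp [intLattice, AddSubgroup.mem_pi, AddSubgroup.mem_zmultiples_iff, eq_comm]

theorem exists_nsmul_add_mem_intLattice_norm_lt {h : ℕ} (w : Fin h → ℝ) {δ : ℝ} (hδ : 0 < δ)
    (M : ℕ) : ∃ j : ℕ, M ≤ j ∧ ∃ z ∈ intLattice h, ‖j • w + z‖ < δ := by
  -- Two close points of the bounded sequence `n ↦ {(M + 1) n w}` differ by a good multiple of `w`.
  set r : ℕ → Fin h → ℝ := fun n i => ((M + 1) * n : ℕ) * w i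
  have hu : ∀ n, (fun i => Int.fract (r n i)) ∈ Icc 0 1 := fun n =>
    ⟨fun i => Int.fract_nonneg _, fun i => (Int.fract_lt_one _).le⟩
  obtain ⟨p, -, φ, hφ, hlim⟩ := isCompact_Icc.tendsto_subseq hu
  obtain ⟨n, hn⟩ := Metric.cauchySeq_iff'.1 hlim.cauchySeq δ hδ
  have hlt : φ n < φ (n + 1) := hφ (Nat.lt_succ_self n)
  refine ⟨(M + 1) * (φ (n + 1) - φ n), by nlinarith [Nat.sub_pos_of_lt hlt],
    fun i => ((⌊r (φ n) i⌋ - ⌊r (φ (n + 1)) i⌋ : ℤ) : ℝ), mem_intLattice.2 fun i => ⟨_, rfl⟩, ?_⟩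
  refine lt_of_eq_of_lt ?_ (hn (n + 1) n.le_succ)
  rw [dist_eq_norm]
  congr 1
  ext i
  simp only [r, Function.comp_apply, Int.fract, Pi.add_apply, Pi.sub_apply, Pi.smul_apply,
    Int.cast_sub]
  push_cast [nsmul_eq_mul, Nat.cast_sub hlt.le]
  ring

def orbitTail (h : ℕ) (v : Fin h → ℝ) (M : ℕ) : Set (Fin h → ℝ) :=
  {x | ∃ m : ℕ, M ≤ m ∧ x - m • v ∈ intLattice h}

lemma preimage_Hclosure (h : ℕ) (v : Fin h → ℝ) :
    torusProj h ⁻¹' Hclosure h v = closure (orbitTail h v 1) := by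
  have hopen : IsOpenMap (torusProj h) := QuotientAddGroup.isOpenMap_coe
  rw [Hclosure, hopen.preimage_closure_eq_closure_preimage continuous_quot_mk]
  congr 1
  ext x
  simp only [mem_preimage, mem_ofPred_eq, orbitTail, torusProj, QuotientAddGroup.mk'_apply,
    QuotientAddGroup.eq, neg_add_eq_sub, AddSubgroup.sub_mem_comm_iff]

theorem closure_orbitTail (h : ℕ) (v : Fin h → ℝ) (M : ℕ) :
    closure (orbitTail h v M) = (AddSubgroup.zmultiples v ⊔ intLattice h).topologicalClosure := by
  rw [AddSubgroup.topologicalClosure_coe]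
  refine subset_antisymm (closure_mono fun x ⟨m, _, hx⟩ => ?_)
    (closure_minimal (fun x hx => ?_) isClosed_closure)
  · rw [← sub_add_cancel x (m • v)]
    exact add_mem (AddSubgroup.mem_sup_right hx)
      (AddSubgroup.mem_sup_left (AddSubgroup.nsmul_mem_zmultiples v m))
  obtain ⟨_, hy, z, hz, rfl⟩ := AddSubgroup.mem_sup.1 hx
  obtain ⟨k, rfl⟩ := AddSubgroup.mem_zmultiples_iff.1 hy
  refine Metric.mem_closure_iff.2 fun δ hδ => ?_
  obtain ⟨j, hj, z', hz', hsmall⟩ :=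
    exists_nsmul_add_mem_intLattice_norm_lt v hδ (M + k.natAbs)
  have hm : (((k + j).toNat : ℕ) : ℤ) = k + j := Int.toNat_of_nonneg (by omega)
  refine ⟨k • v + z + (j • v + z'), ⟨(k + j).toNat, by omega, ?_⟩, by simpa using hsmall⟩
  have hmv : (k + j).toNat • v = k • v + j • v := by
    rw [← natCast_zsmul, hm, add_zsmul, natCast_zsmul]
  rw [hmv]
  convert add_mem hz hz' using 1
  abel

lemma psi_mul_of_pos {t : ℝ} (ht : 0 < t) (s : ℝ) : psi (t * s) = psi s := by
  simp only [psi, show t * s < 0 ↔ s < 0 from ⟨fun h => by nlinarith, fun h => by nlinarith⟩]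

lemma abs_fract_sub_psi_lt {y s η : ℝ} (hys : |y - s| < |s|) (hs : 2 * |s| ≤ min η 1) :
    |Int.fract y - psi s| < η := by
  have hη := min_le_left η 1
  have h1 := min_le_right η 1
  rcases lt_trichotomy s 0 with hneg | rfl | hpos
  · rw [abs_of_neg hneg] at hys hs
    have hy := abs_lt.1 hys
    have hfract : Int.fract y = y + 1 :=
      Int.fract_eq_iff.2 ⟨by linarith, by linarith, -1, by push_cast; ring⟩
    rw [hfract, psi, if_pos hneg, add_sub_cancel_right, abs_of_neg (by linarith)]
    linarith
  · exact absurd hys (by simp)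
  · rw [abs_of_pos hpos] at hys hs
    have hy := abs_lt.1 hys
    rw [Int.fract_eq_self.2 ⟨by linarith, by linarith⟩, psi, if_neg hpos.not_gt, sub_zero,
      abs_of_pos (by linarith)]
    linarith

lemma Int.fract_natCast_mul_ratCast_eq_zero {q : ℚ} {m : ℕ} {y : ℝ} {k : ℤ}
    (hy : y - m * q = k) (hsmall : |y| < (q.den : ℝ)⁻¹) : Int.fract (m * (q : ℝ)) = 0 := by
  have hden : (0 : ℝ) < q.den := Nat.cast_pos.2 q.pos
  have hint : (q.den : ℝ) * y = ((m * q.num + q.den * k : ℤ) : ℝ) := by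
    push_cast
    rw [← hy, ← (by exact_mod_cast q.den_mul_eq_num : (q.den : ℝ) * q = q.num)]
    ring
  have hzero : m * q.num + q.den * k = 0 := by
    rw [← Int.abs_lt_one_iff, ← Int.cast_lt (R := ℝ), Int.cast_abs, ← hint, abs_mul,
      abs_of_pos hden, Int.cast_one]
    simpa [hden.ne'] using mul_lt_mul_of_pos_left hsmall hden
  have hy0 : y = 0 := by
    simpa [hden.ne', hzero] using hint
  rw [show (m : ℝ) * q = ((-k : ℤ) : ℝ) by push_cast; linarith, Int.fract_intCast]

lemma Real.sqrt_sum_sq_le {ι : Type*} [Fintype ι] {c : ι → ℝ} {η : ℝ} (hη : 0 ≤ η)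
    (hc : ∀ i, |c i| ≤ η) : √(∑ i, c i ^ 2) ≤ √(Fintype.card ι) * η := by
  calc √(∑ i, c i ^ 2) ≤ √(∑ _i : ι, η ^ 2) :=
        Real.sqrt_le_sqrt <| Finset.sum_le_sum fun i _ =>
          sq_le_sq' (abs_le.1 (hc i)).1 (abs_le.1 (hc i)).2
    _ = √(Fintype.card ι) * η := by
        rw [Finset.sum_const, Finset.card_univ, nsmul_eq_mul, Real.sqrt_mul (Nat.cast_nonneg _),
          Real.sqrt_sq hη]

theorem infinite_setOfPred_forall_abs_fract_sub_psi_lt {h : ℕ} {v a : Fin h → ℝ}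
    (ha : a ∈ Aset h v) {η : ℝ} (hη : 0 < η) :
    {N : ℕ | ∀ i, |Int.fract ((N : ℝ) * v i) - psi (a i)| < η}.Infinite := by
  have haV : a ∈ connectedComponentIn
      ((AddSubgroup.zmultiples v ⊔ intLattice h).topologicalClosure : Set (Fin h → ℝ)) 0 := by
    simpa only [Vcomp, preimage_Hclosure, closure_orbitTail] using ha.1
  have hrat : ∀ i, a i = 0 → ∃ q : ℚ, (q : ℝ) = v i := fun i hai =>
    not_not.1 fun hirr => ha.2 (mem_iUnion₂.2 ⟨i, hirr, hai⟩)
  choose! q hq using hrat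
  set t := min η 1 / (2 * (‖a‖ + 1))
  have ht : 0 < t := by positivity
  have hts : ∀ i, 2 * |t * a i| ≤ min η 1 := fun i => by
    rw [abs_mul, abs_of_pos ht]
    calc 2 * (t * |a i|) ≤ 2 * (t * (‖a‖ + 1)) := by
          gcongr
          linarith [(Real.norm_eq_abs _).symm.trans_le (norm_le_pi_norm a i)]
      _ = min η 1 := by simp only [t]; field_simp
  set ρ : Fin h → ℝ := fun i => if a i = 0 then ((q i).den : ℝ)⁻¹ else |t * a i|
  set O := {y : Fin h → ℝ | ∀ i, |y i - t * a i| < ρ i}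
  have hO : IsOpen O := by
    simp only [O, ofPred_forall]
    exact isOpen_iInter_of_finite fun i => isOpen_lt (by fun_prop) continuous_const
  have htaO : t • a ∈ O := fun i => by
    by_cases hai : a i = 0 <;> simp [ρ, hai, ht.ne', (q i).pos]
  refine infinite_of_forall_exists_gt fun M => ?_
  have hta : t • a ∈ closure (orbitTail h v (M + 1)) := by
    rw [closure_orbitTail]
    exact AddSubgroup.smul_mem_of_mem_connectedComponentIn _
      (AddSubgroup.isClosed_topologicalClosure _) haV t
  obtain ⟨y, hyO, m, hm, hym⟩ := mem_closure_iff.1 hta O hO htaO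
  refine ⟨m, fun i => ?_, hm⟩
  obtain ⟨k, hk⟩ := mem_intLattice.1 hym i
  rw [Pi.sub_apply, Pi.smul_apply, nsmul_eq_mul] at hk
  have hyi := hyO i
  by_cases hai : a i = 0
  · simp only [ρ, hai, mul_zero, sub_zero, if_true] at hyi
    rw [← hq i hai] at hk ⊢
    rw [Int.fract_natCast_mul_ratCast_eq_zero hk hyi, hai, psi, if_neg (lt_irrefl 0)]
    simpa using hη
  · simp only [ρ, if_neg hai] at hyi
    rw [← psi_mul_of_pos ht, ← Int.fract_eq_fract.2 ⟨k, hk⟩]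
    exact abs_fract_sub_psi_lt hyi (hts i)

theorem infinitely_many_N_with_fract_close_to_chi_general
    (h : ℕ) (v : Fin h → ℝ) (a : Fin h → ℝ) (ha : a ∈ Aset h v)
    (ε : ℝ) (hε : 0 < ε) :
    {N : ℕ | Real.sqrt (∑ i, (Int.fract ((N : ℝ) * v i) - psi (a i)) ^ 2) < ε}.Infinite := by
  set η := ε / (√h + 1)
  have hη : 0 < η := by positivity
  refine (infinite_setOfPred_forall_abs_fract_sub_psi_lt ha hη).mono fun N hN => ?_
  calc √(∑ i, (Int.fract ((N : ℝ) * v i) - psi (a i)) ^ 2) ≤ √h * η := by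
        simpa using Real.sqrt_sum_sq_le hη.le fun i => (hN i).le
    _ < (√h + 1) * η := by linarith
    _ = ε := by simp only [η]; field_simp

theorem infinitely_many_N_with_fract_close_to_chi
    (h : ℕ) (hh : 1 ≤ h) (v : Fin h → ℝ) (a : Fin h → ℝ) (ha : a ∈ Aset h v)
    (ε : ℝ) (hε : 0 < ε) (hε' : ε < 1 / 3) :
    {N : ℕ | Real.sqrt (∑ i, (Int.fract ((N : ℝ) * v i) - psi (a i)) ^ 2) < ε}.Infinite :=
  infinitely_many_N_with_fract_close_to_chi_general h v a ha ε hε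

end
end

section
/- Let q ≥ 1, let î₁, …, î_q be positive real numbers, and for each k ∈ {1,…,q} let θ_{k,1}, …, θ_{k,μ_k} be finitely many real numbers in (0, 2π). Then for every δ ∈ (0, 1/2) and every ε > 0, there exist infinitely many N ∈ ℕ such that for each k ∈ {1,…,q} there is an integer m_k ≥ 1 satisfying: (i) |m_k · î_k − N| < ε; (ii) for every j ∈ {1,…,μ_k}, min({m_k θ_{k,j}/π}, 1 − {m_k θ_{k,j}/π}) < δ; and (iii) m_k θ_{k,j}/π ∈ ℤ whenever θ_{k,j}/π ∈ ℚ. -/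
/-!
By recurrence in the compact torus, the numbers `N / (L k * ihat k)` and
`N * θ k j / (π * ihat k)` are simultaneously close to integers for infinitely many `N`, where
`L k` clears the denominators of the rational `θ k j / π`. For such `N`, let `p` be an integer
close to `N / (L k * ihat k)` and `m = L k * p`. Then `m * ihat k ≈ N`, and
`m * θ k j / π = p * (L k * θ k j / π)` is close to the integer nearest
`N * θ k j / (π * ihat k)` (the error is controlled because `θ k j < 2 * π`); it is an integer
when `θ k j / π` is rational.
-/

open Real Set Filter Topology

theorem exists_tendsto_atTop_nsmul_tendsto_zero {G : Type*} [AddCommGroup G] [TopologicalSpace G]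
    [IsTopologicalAddGroup G] [SeqCompactSpace G] (x : G) :
    ∃ n : ℕ → ℕ, Tendsto n atTop atTop ∧ Tendsto (fun i ↦ n i • x) atTop (𝓝 0) := by
  obtain ⟨y, φ, hφ, hy⟩ := SeqCompactSpace.tendsto_subseq fun n : ℕ ↦ n • x
  -- `φ (2 * i) - φ i ≥ i`, while `φ (2 * i) • x` and `φ i • x` tend to the same limit `y`.
  refine ⟨fun i ↦ φ (2 * i) - φ i, tendsto_atTop_mono (fun i ↦ ?_) tendsto_id, ?_⟩
  · have hgap := hφ.add_le_nat i i
    rw [← two_mul] at hgap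
    dsimp; omega
  · have h2 : Tendsto (fun i : ℕ ↦ 2 * i) atTop atTop :=
      tendsto_id.const_mul_atTop' two_pos
    have hdiff := (hy.comp h2).sub hy
    rw [sub_self] at hdiff
    refine hdiff.congr fun i ↦ ?_
    simp only [Function.comp_apply]
    rw [sub_nsmul _ (hφ.monotone (by omega)), sub_eq_add_neg]

theorem frequently_forall_abs_natCast_mul_sub_intCast_lt {ι : Type*} [Finite ι] (v : ι → ℝ)
    {η : ι → ℝ} (hη : ∀ i, 0 < η i) :
    ∃ᶠ N : ℕ in atTop, ∀ i, ∃ p : ℤ, |N * v i - p| < η i := by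
  obtain ⟨n, hn, hlim⟩ :=
    exists_tendsto_atTop_nsmul_tendsto_zero fun i ↦ (v i : UnitAddCircle)
  refine hn.frequently (Eventually.frequently ?_)
  refine eventually_all.2 fun i ↦ ?_
  have hi := tendsto_pi_nhds.1 hlim i
  filter_upwards [(tendsto_norm_zero.comp hi).eventually (gt_mem_nhds (hη i))] with m hm
  refine ⟨round (n m * v i), ?_⟩
  rw [Function.comp_apply, Pi.smul_apply, ← AddCircle.coe_nsmul, UnitAddCircle.norm_eq,
    nsmul_eq_mul] at hm
  exact hm

theorem exists_common_denominator {ι : Type*} [Fintype ι] (x : ι → ℝ) :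
    ∃ L : ℕ, 0 < L ∧ ∀ j, (∃ r : ℚ, x j = r) → ∃ z : ℤ, L * x j = z := by
  have hden : ∀ j, ∃ d : ℕ, 0 < d ∧ ((∃ r : ℚ, x j = r) → ∃ z : ℤ, d * x j = z) := by
    intro j
    by_cases h : ∃ r : ℚ, x j = r
    · obtain ⟨r, hr⟩ := h
      refine ⟨r.den, r.pos, fun _ ↦ ⟨r.num, ?_⟩⟩
      rw [hr, mul_comm]; exact_mod_cast Rat.mul_den_eq_num r
    · exact ⟨1, one_pos, fun h' ↦ absurd h' h⟩
  choose d hd hdx using hden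
  refine ⟨∏ j, d j, Finset.prod_pos fun j _ ↦ hd j, fun j hj ↦ ?_⟩
  obtain ⟨c, hc⟩ := Finset.dvd_prod_of_mem d (Finset.mem_univ j)
  obtain ⟨z, hz⟩ := hdx j hj
  refine ⟨c * z, ?_⟩
  rw [hc]; push_cast; rw [← hz]; ring

theorem exists_index_jump_of_approx {ι : Type*} {a ε δ : ℝ} (ha : 0 < a) {L : ℕ} (hL : 0 < L)
    {θ : ι → ℝ} (hθ : ∀ j, θ j ∈ Ioo 0 (2 * π))
    (hLθ : ∀ j, (∃ r : ℚ, θ j / π = r) → ∃ z : ℤ, L * (θ j / π) = z)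
    {N : ℕ} (hN : ε ≤ N) {p : ℤ}
    (hp : |(N : ℝ) / (L * a) - p| < min (ε / (L * a)) (δ / (4 * L)))
    (hz : ∀ j, ∃ z : ℤ, |N * θ j / (π * a) - z| < δ / 2) :
    ∃ m : ℕ, 1 ≤ m ∧ |(m : ℝ) * a - N| < ε ∧
      (∀ j, min (Int.fract ((m : ℝ) * θ j / π)) (1 - Int.fract ((m : ℝ) * θ j / π)) < δ) ∧
      (∀ j, (∃ r : ℚ, θ j / π = r) → ∃ z : ℤ, (m : ℝ) * θ j / π = z) := by
  have hL' : (0 : ℝ) < L := Nat.cast_pos.2 hL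
  have hA : 0 < (L : ℝ) * a := mul_pos hL' ha
  have hpA : |p * (L * a) - N| < ε := by
    have := (lt_min_iff.1 hp).1
    rwa [abs_sub_comm, lt_div_iff₀ hA, ← abs_of_pos hA, ← abs_mul, abs_of_pos hA, sub_mul,
      div_mul_cancel₀ _ hA.ne'] at this
  have hp0 : 0 < p := by
    have : (0 : ℝ) < p * (L * a) := by linarith [(abs_lt.1 hpA).1]
    exact_mod_cast pos_of_mul_pos_left this hA.le
  lift p to ℕ using hp0.le
  refine ⟨L * p, Nat.mul_pos hL (by exact_mod_cast hp0), ?_, fun j ↦ ?_, fun j hj ↦ ?_⟩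
  · have hma : ((L * p : ℕ) : ℝ) * a = p * (L * a) := by push_cast; ring
    rw [hma]
    exact_mod_cast hpA
  · obtain ⟨z, hz⟩ := hz j
    obtain ⟨hθ0, hθ2π⟩ := hθ j
    have hβ : 0 < L * θ j / π := by positivity
    have hβ' : L * θ j / π < 2 * L := by
      rw [div_lt_iff₀ pi_pos]; nlinarith
    have hsplit : ((L * p : ℕ) : ℝ) * θ j / π - z
        = (p - N / (L * a)) * (L * θ j / π) + (N * θ j / (π * a) - z) := by
      push_cast
      field_simp
      ring
    calc min (Int.fract (((L * p : ℕ) : ℝ) * θ j / π))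
          (1 - Int.fract (((L * p : ℕ) : ℝ) * θ j / π))
        ≤ |((L * p : ℕ) : ℝ) * θ j / π - z| :=
          (abs_sub_round_eq_min _).symm.trans_le (round_le _ z)
      _ ≤ |(p : ℝ) - N / (L * a)| * (L * θ j / π) + |N * θ j / (π * a) - z| := by
        rw [hsplit, ← abs_of_pos hβ, ← abs_mul, abs_of_pos hβ]; exact abs_add_le _ _
      _ < δ / (4 * L) * (2 * L) + δ / 2 := by
        gcongr
        rw [abs_sub_comm]; exact (lt_min_iff.1 hp).2
      _ = δ := by field_simp; ring
  · obtain ⟨z, hz⟩ := hLθ j hj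
    exact ⟨p * z, by push_cast; rw [← hz]; ring⟩

theorem common_index_jump_selection_general
    (q : ℕ) (ihat : Fin q → ℝ) (hpos : ∀ k, 0 < ihat k)
    (μ : Fin q → ℕ) (θ : (k : Fin q) → Fin (μ k) → ℝ)
    (hθ : ∀ k j, θ k j ∈ Set.Ioo 0 (2 * π))
    (δ : ℝ) (hδ : δ ∈ Set.Ioo 0 (1 / 2 : ℝ)) (ε : ℝ) (hε : 0 < ε) :
    {N : ℕ | ∀ k : Fin q, ∃ m : ℕ, 1 ≤ m ∧
      |(m : ℝ) * ihat k - (N : ℝ)| < ε ∧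
      (∀ j, min (Int.fract ((m : ℝ) * θ k j / π))
          (1 - Int.fract ((m : ℝ) * θ k j / π)) < δ) ∧
      (∀ j, (∃ r : ℚ, θ k j / π = (r : ℝ)) →
          ∃ z : ℤ, (m : ℝ) * θ k j / π = (z : ℝ))}.Infinite := by
  have hLex : ∀ k, ∃ L : ℕ, 0 < L ∧
      ∀ j, (∃ r : ℚ, θ k j / π = r) → ∃ z : ℤ, L * (θ k j / π) = z :=
    fun k ↦ exists_common_denominator fun j ↦ θ k j / π
  choose L hL hLθ using hLex
  have hfreq := frequently_forall_abs_natCast_mul_sub_intCast_lt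
    (Sum.elim (fun k ↦ (L k * ihat k)⁻¹) fun kj : Σ k, Fin (μ k) ↦ θ kj.1 kj.2 / (π * ihat kj.1))
    (η := Sum.elim (fun k ↦ min (ε / (L k * ihat k)) (δ / (4 * L k))) fun _ ↦ δ / 2) (by
      rintro (k | _)
      · exact lt_min (div_pos hε (mul_pos (Nat.cast_pos.2 (hL k)) (hpos k)))
          (div_pos hδ.1 (by have := hL k; positivity))
      · exact half_pos hδ.1)
  refine Nat.frequently_atTop_iff_infinite.1 <|
    (hfreq.and_eventually (eventually_ge_atTop ⌈ε⌉₊)).mono fun N ⟨hN, hNε⟩ k ↦ ?_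
  obtain ⟨p, hp⟩ := hN (.inl k)
  refine exists_index_jump_of_approx (hpos k) (hL k) (hθ k) (hLθ k) (Nat.ceil_le.1 hNε)
    (p := p) ?_ ?_
  · simpa only [Sum.elim_inl, div_eq_mul_inv] using hp
  · intro j
    simpa only [Sum.elim_inr, mul_div_assoc] using hN (.inr ⟨k, j⟩)

theorem common_index_jump_selection
    (q : ℕ) (hq : 1 ≤ q) (ihat : Fin q → ℝ) (hpos : ∀ k, 0 < ihat k)
    (μ : Fin q → ℕ) (θ : (k : Fin q) → Fin (μ k) → ℝ)
    (hθ : ∀ k j, θ k j ∈ Set.Ioo 0 (2 * π))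
    (δ : ℝ) (hδ : δ ∈ Set.Ioo 0 (1 / 2 : ℝ)) (ε : ℝ) (hε : 0 < ε) :
    {N : ℕ | ∀ k : Fin q, ∃ m : ℕ, 1 ≤ m ∧
      |(m : ℝ) * ihat k - (N : ℝ)| < ε ∧
      (∀ j, min (Int.fract ((m : ℝ) * θ k j / π))
          (1 - Int.fract ((m : ℝ) * θ k j / π)) < δ) ∧
      (∀ j, (∃ r : ℚ, θ k j / π = (r : ℝ)) →
          ∃ z : ℤ, (m : ℝ) * θ k j / π = (z : ℝ))}.Infinite :=
  common_index_jump_selection_general q ihat hpos μ θ hθ δ hδ ε hε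
end
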